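/- Let $d \geq 2$ and $a > 0$. Let $\widetilde\Gamma$ be the $d\times d$ symmetric tridiagonal matrix with diagonal $[a,\,1+2a,\,\dots,\,1+2a,\,1+a]$ (first entry $a$, last entry $1+a$, all middle entries $1+2a$) and with all subdiagonal and superdiagonal entries equal to $-\sqrt{a(1+a)}$. Then $\widetilde\Gamma$ is positive semidefinite and its kernel is exactly the one-dimensional span of the vector $v = (1, \sqrt{a/(1+a)}, (a/(1+a)), \dots, (a/(1+a))^{(d-1)/2})$, i.e. $v_j = (a/(1+a))^{j/2}$ for $j=0,\dots,d-1$. -/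

import Mathlib

/-!
With `B` the weighted difference operator `(B x)ₖ = √(1+a) xₖ₊₁ - √a xₖ` from `ℝᵈ` to `ℝᵈ⁻¹`,
one has `Γ̃ = Bᵀ B`. Hence `Γ̃` is positive semidefinite and `ker Γ̃ = ker B`, and the solutions of
`B x = 0` are exactly the geometric sequences of ratio `√a / √(1+a) = √(a/(1+a))`.
-/

open Matrix

variable {R : Type*}

def weightedDiff [Ring R] (α β : R) (m : ℕ) : Matrix (Fin m) (Fin (m + 1)) R :=
  of fun k j => if j = k.castSucc then -α else if j = k.succ then β else 0

section CommRing

variable [CommRing R] (α β : R) {m : ℕ}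

theorem weightedDiff_transpose_mul_self_apply (hm : 1 ≤ m) (i j : Fin (m + 1)) :
    ((weightedDiff α β m)ᵀ * weightedDiff α β m) i j =
      if i = j then (if (i : ℕ) = 0 then α ^ 2 else if (i : ℕ) = m then β ^ 2 else α ^ 2 + β ^ 2)
      else if (i : ℕ) = j + 1 ∨ (j : ℕ) = i + 1 then -(α * β) else 0 := by
  have expand : ∀ k : Fin m, weightedDiff α β m k i * weightedDiff α β m k j =
      (if (k : ℕ) = i ∧ (k : ℕ) = j then α ^ 2 else 0)
        + (if (k : ℕ) + 1 = i ∧ (k : ℕ) + 1 = j then β ^ 2 else 0)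
        + (if (k : ℕ) = i ∧ (k : ℕ) + 1 = j then -(α * β) else 0)
        + (if (k : ℕ) + 1 = i ∧ (k : ℕ) = j then -(α * β) else 0) := by
    intro k
    simp only [weightedDiff, of_apply, Fin.ext_iff, Fin.val_castSucc, Fin.val_succ]
    split_ifs <;> first | ring1 | (exfalso; omega)
  simp only [mul_apply, transpose_apply, expand, Finset.sum_add_distrib]
  -- each of the four indicator conditions holds for at most one `k`
  rw [Fintype.sum_ite_eq_ite_exists, Fintype.sum_ite_eq_ite_exists,
    Fintype.sum_ite_eq_ite_exists, Fintype.sum_ite_eq_ite_exists]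
  · simp only [Fin.exists_iff, exists_prop, Fin.ext_iff]
    have e₁ : (∃ k < m, k = i ∧ k = (j : ℕ)) ↔ (i : ℕ) = j ∧ (i : ℕ) < m :=
      ⟨fun ⟨k, _, _, _⟩ => by omega, fun _ => ⟨i, by omega⟩⟩
    have e₂ : (∃ k < m, k + 1 = i ∧ k + 1 = (j : ℕ)) ↔ (i : ℕ) = j ∧ (i : ℕ) ≠ 0 :=
      ⟨fun ⟨k, _, _, _⟩ => by omega, fun _ => ⟨i - 1, by omega⟩⟩
    have e₃ : (∃ k < m, k = i ∧ k + 1 = (j : ℕ)) ↔ (j : ℕ) = i + 1 :=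
      ⟨fun ⟨k, _, _, _⟩ => by omega, fun _ => ⟨i, by omega⟩⟩
    have e₄ : (∃ k < m, k + 1 = i ∧ k = (j : ℕ)) ↔ (i : ℕ) = j + 1 :=
      ⟨fun ⟨k, _, _, _⟩ => by omega, fun _ => ⟨j, by omega⟩⟩
    rw [if_congr e₁ rfl rfl, if_congr e₂ rfl rfl, if_congr e₃ rfl rfl, if_congr e₄ rfl rfl]
    split_ifs <;> first | ring1 | (exfalso; omega)
  all_goals exact fun k l _ _ => Fin.ext (by omega)

theorem weightedDiff_mulVec_apply (x : Fin (m + 1) → R) (k : Fin m) :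
    (weightedDiff α β m *ᵥ x) k = β * x k.succ - α * x k.castSucc := by
  have expand : ∀ j, weightedDiff α β m k j * x j =
      (if j = k.castSucc then -α * x j else 0) + (if j = k.succ then β * x j else 0) := by
    intro j
    have : k.castSucc ≠ k.succ := Fin.castSucc_lt_succ.ne
    simp only [weightedDiff, of_apply]
    split_ifs <;> first | ring1 | (exfalso; simp_all)
  simp only [mulVec, dotProduct, expand, Finset.sum_add_distrib, Finset.sum_ite_eq',
    Finset.mem_univ, if_true]
  ring

theorem exists_eq_smul_pow_iff (r : R) (x : Fin (m + 1) → R) :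
    (∃ c : R, x = c • fun j : Fin (m + 1) => r ^ (j : ℕ)) ↔
      ∀ k : Fin m, x k.succ = r * x k.castSucc := by
  constructor
  · rintro ⟨c, rfl⟩ k
    simp only [Pi.smul_apply, smul_eq_mul, Fin.val_succ, Fin.val_castSucc, pow_succ]
    ring
  · intro hx
    refine ⟨x 0, funext fun j => ?_⟩
    induction j using Fin.induction with
    | zero => simp
    | succ k ih =>
      simp only [Pi.smul_apply, smul_eq_mul] at ih ⊢
      rw [hx, ih, Fin.val_succ, Fin.val_castSucc, pow_succ]
      ring

end CommRing

theorem weightedDiff_mulVec_eq_zero_iff [Field R] {α β : R} (hβ : β ≠ 0) {m : ℕ}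
    (x : Fin (m + 1) → R) :
    weightedDiff α β m *ᵥ x = 0 ↔ ∃ c : R, x = c • fun j : Fin (m + 1) => (α / β) ^ (j : ℕ) := by
  rw [exists_eq_smul_pow_iff, funext_iff]
  refine forall_congr' fun k => ?_
  rw [weightedDiff_mulVec_apply, Pi.zero_apply, sub_eq_zero, div_mul_eq_mul_div,
    eq_div_iff hβ, mul_comm]

/-- The tridiagonal level-shift matrix `Γ̃` with diagonal `[a, 1+2a, …, 1+2a, 1+a]` and
off-diagonal entries `-√(a(1+a))` is positive semidefinite, and its kernel is exactly
the span of the vector `v` with `v j = (a/(1+a))^(j/2)`. -/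
theorem stmt1 (d : ℕ) (hd : 2 ≤ d) (a : ℝ) (ha : 0 < a) :
    let Γ : Matrix (Fin d) (Fin d) ℝ := fun i j =>
      if i = j then
        (if (i : ℕ) = 0 then a else if (i : ℕ) = d - 1 then 1 + a else 1 + 2 * a)
      else if (i : ℕ) = (j : ℕ) + 1 ∨ (j : ℕ) = (i : ℕ) + 1 then
        -Real.sqrt (a * (1 + a))
      else 0
    let v : Fin d → ℝ := fun j => Real.sqrt (a / (1 + a)) ^ (j : ℕ)
    Γ.PosSemidef ∧ (∀ x : Fin d → ℝ, Γ.mulVec x = 0 ↔ ∃ c : ℝ, x = c • v) := by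
  intro Γ v
  obtain ⟨m, rfl⟩ : ∃ m, d = m + 1 := ⟨d - 1, by omega⟩
  set B := weightedDiff (Real.sqrt a) (Real.sqrt (1 + a)) m
  have hΓ : Γ = Bᴴ * B := by
    ext i j
    rw [conjTranspose_eq_transpose_of_trivial, weightedDiff_transpose_mul_self_apply _ _ (by omega),
      Real.sq_sqrt ha.le, Real.sq_sqrt (by positivity), ← Real.sqrt_mul ha.le]
    simp only [Γ, Fin.ext_iff, add_tsub_cancel_right]
    split_ifs <;> ring
  refine ⟨hΓ ▸ posSemidef_conjTranspose_mul_self B, fun x => ?_⟩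
  rw [hΓ, conjTranspose_mul_self_mulVec_eq_zero,
    weightedDiff_mulVec_eq_zero_iff (Real.sqrt_pos.2 (by positivity)).ne', ← Real.sqrt_div ha.le]
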